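/- Fix h ∈ ℝ and ρ > 0. Then ∫_{−∞}^{h} [1 − Φ(b + â) + e^{−2âb} Φ(b − â)] φ(x₀) dx₀ + 1 − Φ(h) = 1 − Φ(h+ρ)Φ(h) + (φ(h+ρ)/ρ)Φ(h) − (φ(h)e^{−2hρ}/ρ)Φ(h−ρ), where â = (h − x₀)/2 + ρ and b = (h + x₀)/2. -/

import Mathlib

/-!
Since `e^{-2âb} φ(x₀) = φ(h) e^{-ρh} e^{-ρx₀}`, the integrand is
`(1 - Φ(h+ρ)) φ(x₀) + φ(h) e^{-ρh} · e^{-ρx₀} Φ(x₀-ρ)`. The Gaussian tilt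
`e^{-ρx} φ(x-ρ) = e^{-ρ²/2} φ(x)` makes `(e^{-ρ²/2} Φ(x) - e^{-ρx} Φ(x-ρ)) / ρ` an antiderivative
of `e^{-ρx} Φ(x-ρ)`; integrating the tilt over `(-∞, x]` shows that this antiderivative is
nonnegative and tends to `0` at `-∞`, which gives both the integrability and the value of the
improper integral.
-/

open MeasureTheory Set

/-- Standard normal density. -/
noncomputable def stdGaussPDF (x : ℝ) : ℝ :=
  (Real.sqrt (2 * Real.pi))⁻¹ * Real.exp (-x ^ 2 / 2)

/-- Standard normal c.d.f. `Φ`. -/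
noncomputable def stdGaussCDF (t : ℝ) : ℝ := ∫ x in Set.Iic t, stdGaussPDF x

open Real Filter Topology

theorem integrableOn_Iic_of_hasDerivAt_of_nonneg {f f' : ℝ → ℝ} (a : ℝ)
    (hderiv : ∀ x, HasDerivAt f (f' x) x) (hf'_cont : Continuous f') (hf' : ∀ x, 0 ≤ f' x)
    (hf : ∀ x, 0 ≤ f x) : IntegrableOn f' (Iic a) := by
  refine integrableOn_Iic_of_intervalIntegral_norm_bounded (f a) a
    (fun _ => hf'_cont.integrableOn_Ioc) tendsto_id (Eventually.of_forall fun i => ?_)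
  simp only [Real.norm_of_nonneg (hf' _)]
  rw [intervalIntegral.integral_eq_sub_of_hasDerivAt (fun x _ => hderiv x)
    (hf'_cont.intervalIntegrable _ _)]
  exact sub_le_self _ (hf _)

theorem stdGaussPDF_eq_gaussianPDFReal : stdGaussPDF = ProbabilityTheory.gaussianPDFReal 0 1 := by
  ext x
  simp [stdGaussPDF, ProbabilityTheory.gaussianPDFReal]

theorem stdGaussPDF_nonneg (x : ℝ) : 0 ≤ stdGaussPDF x := by
  unfold stdGaussPDF; positivity

theorem continuous_stdGaussPDF : Continuous stdGaussPDF := by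
  unfold stdGaussPDF; fun_prop

theorem integrable_stdGaussPDF : Integrable stdGaussPDF :=
  stdGaussPDF_eq_gaussianPDFReal ▸ ProbabilityTheory.integrable_gaussianPDFReal 0 1

theorem stdGaussPDF_add (x y : ℝ) :
    stdGaussPDF (x + y) = stdGaussPDF x * exp (-x * y - y ^ 2 / 2) := by
  rw [stdGaussPDF, stdGaussPDF, mul_assoc, ← exp_add]
  ring_nf

theorem exp_neg_mul_mul_stdGaussPDF_sub (ρ x : ℝ) :
    exp (-ρ * x) * stdGaussPDF (x - ρ) = exp (-ρ ^ 2 / 2) * stdGaussPDF x := by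
  rw [sub_eq_add_neg, stdGaussPDF_add, mul_left_comm, ← exp_add]
  ring_nf

theorem stdGaussCDF_nonneg (t : ℝ) : 0 ≤ stdGaussCDF t :=
  setIntegral_nonneg measurableSet_Iic fun x _ => stdGaussPDF_nonneg x

theorem stdGaussCDF_sub_stdGaussCDF (s t : ℝ) :
    stdGaussCDF t - stdGaussCDF s = ∫ x in s..t, stdGaussPDF x :=
  intervalIntegral.integral_Iic_sub_Iic integrable_stdGaussPDF.integrableOn
    integrable_stdGaussPDF.integrableOn

theorem hasDerivAt_stdGaussCDF (x : ℝ) : HasDerivAt stdGaussCDF (stdGaussPDF x) x := by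
  have hFTC : HasDerivAt (fun t => stdGaussCDF 0 + ∫ u in (0 : ℝ)..t, stdGaussPDF u)
      (stdGaussPDF x) x :=
    (intervalIntegral.integral_hasDerivAt_right integrable_stdGaussPDF.intervalIntegrable
      (continuous_stdGaussPDF.stronglyMeasurableAtFilter _ _)
      continuous_stdGaussPDF.continuousAt).const_add _
  refine hFTC.congr_of_eventuallyEq (Eventually.of_forall fun t => ?_)
  simp only [← stdGaussCDF_sub_stdGaussCDF]
  ring

@[fun_prop]
theorem continuous_stdGaussCDF : Continuous stdGaussCDF :=
  continuous_iff_continuousAt.2 fun x => (hasDerivAt_stdGaussCDF x).continuousAt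

theorem tendsto_stdGaussCDF_atBot : Tendsto stdGaussCDF atBot (𝓝 0) := by
  have hlim := (intervalIntegral_tendsto_integral_Iic 0 integrable_stdGaussPDF.integrableOn
    tendsto_id).const_sub (stdGaussCDF 0)
  rw [← stdGaussCDF, sub_self] at hlim
  refine hlim.congr fun t => ?_
  rw [id, ← stdGaussCDF_sub_stdGaussCDF]
  ring

theorem stdGaussCDF_sub_eq_integral (ρ x : ℝ) :
    stdGaussCDF (x - ρ) = ∫ u in Iic x, stdGaussPDF (u - ρ) := by
  rw [stdGaussCDF, ← (measurePreserving_sub_right volume ρ).setIntegral_preimage_emb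
    (measurableEmbedding_subRight ρ), preimage_sub_const_Iic, sub_add_cancel]

theorem exp_neg_mul_mul_stdGaussCDF_sub_le {ρ : ℝ} (hρ : 0 ≤ ρ) (x : ℝ) :
    exp (-ρ * x) * stdGaussCDF (x - ρ) ≤ exp (-ρ ^ 2 / 2) * stdGaussCDF x := by
  rw [stdGaussCDF_sub_eq_integral, stdGaussCDF, ← integral_const_mul, ← integral_const_mul]
  refine setIntegral_mono_on ((integrable_stdGaussPDF.comp_sub_right ρ).const_mul _).integrableOn
    (integrable_stdGaussPDF.const_mul _).integrableOn measurableSet_Iic fun u hu => ?_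
  rw [← exp_neg_mul_mul_stdGaussPDF_sub]
  exact mul_le_mul_of_nonneg_right (exp_le_exp.2 (by nlinarith [mem_Iic.1 hu]))
    (stdGaussPDF_nonneg _)

theorem tendsto_exp_neg_mul_mul_stdGaussCDF_sub_atBot {ρ : ℝ} (hρ : 0 ≤ ρ) :
    Tendsto (fun x => exp (-ρ * x) * stdGaussCDF (x - ρ)) atBot (𝓝 0) := by
  have hbound := tendsto_stdGaussCDF_atBot.const_mul (exp (-ρ ^ 2 / 2))
  rw [mul_zero] at hbound
  exact squeeze_zero (fun x => mul_nonneg (exp_nonneg _) (stdGaussCDF_nonneg _))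
    (exp_neg_mul_mul_stdGaussCDF_sub_le hρ) hbound

theorem hasDerivAt_exp_mul_stdGaussCDF_sub_exp_neg_mul_mul_stdGaussCDF_sub (ρ x : ℝ) :
    HasDerivAt (fun x => exp (-ρ ^ 2 / 2) * stdGaussCDF x - exp (-ρ * x) * stdGaussCDF (x - ρ))
      (ρ * (exp (-ρ * x) * stdGaussCDF (x - ρ))) x := by
  have hexp : HasDerivAt (fun x => exp (-ρ * x)) (exp (-ρ * x) * -ρ) x := by
    simpa using ((hasDerivAt_id x).const_mul (-ρ)).exp
  have hshift : HasDerivAt (fun x => stdGaussCDF (x - ρ)) (stdGaussPDF (x - ρ)) x := by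
    simpa using (hasDerivAt_stdGaussCDF (x - ρ)).comp_sub_const x ρ
  refine (((hasDerivAt_stdGaussCDF x).const_mul (exp (-ρ ^ 2 / 2))).sub
    (hexp.mul hshift)).congr_deriv ?_
  linear_combination -exp_neg_mul_mul_stdGaussPDF_sub ρ x

theorem integrableOn_Iic_exp_neg_mul_mul_stdGaussCDF_sub {ρ : ℝ} (hρ : 0 < ρ) (a : ℝ) :
    IntegrableOn (fun x => exp (-ρ * x) * stdGaussCDF (x - ρ)) (Iic a) :=
  integrableOn_Iic_of_hasDerivAt_of_nonneg a
    (fun x => by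
      simpa [hρ.ne'] using
        (hasDerivAt_exp_mul_stdGaussCDF_sub_exp_neg_mul_mul_stdGaussCDF_sub ρ x).div_const ρ)
    (by fun_prop)
    (fun x => mul_nonneg (exp_nonneg _) (stdGaussCDF_nonneg _))
    (fun x => div_nonneg (sub_nonneg.2 (exp_neg_mul_mul_stdGaussCDF_sub_le hρ.le x)) hρ.le)

theorem integral_Iic_exp_neg_mul_mul_stdGaussCDF_sub {ρ : ℝ} (hρ : 0 < ρ) (a : ℝ) :
    ∫ x in Iic a, exp (-ρ * x) * stdGaussCDF (x - ρ)
      = (exp (-ρ ^ 2 / 2) * stdGaussCDF a - exp (-ρ * a) * stdGaussCDF (a - ρ)) / ρ := by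
  have hlim := ((tendsto_stdGaussCDF_atBot.const_mul (exp (-ρ ^ 2 / 2))).sub
    (tendsto_exp_neg_mul_mul_stdGaussCDF_sub_atBot hρ.le)).div_const ρ
  rw [mul_zero, sub_zero, zero_div] at hlim
  rw [integral_Iic_of_hasDerivAt_of_tendsto' (fun x _ => ?_)
    (integrableOn_Iic_exp_neg_mul_mul_stdGaussCDF_sub hρ a) hlim, sub_zero]
  simpa [hρ.ne'] using
    (hasDerivAt_exp_mul_stdGaussCDF_sub_exp_neg_mul_mul_stdGaussCDF_sub ρ x).div_const ρ

/-- Explicit evaluation of the corrected diffusion approximation for `M = L`: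
with `â = (h−x₀)/2 + ρ` and `b = (h+x₀)/2`,
`∫_{−∞}^h [1 − Φ(b+â) + e^{−2âb}Φ(b−â)] φ(x₀) dx₀ + 1 − Φ(h)
  = 1 − Φ(h+ρ)Φ(h) + (φ(h+ρ)/ρ)Φ(h) − (φ(h)e^{−2hρ}/ρ)Φ(h−ρ)`. -/
theorem corrected_diffusion_explicit (h ρ : ℝ) (hρ : 0 < ρ) :
    (∫ x₀ in Set.Iic h,
        (1 - stdGaussCDF ((h + x₀) / 2 + ((h - x₀) / 2 + ρ))
          + Real.exp (-2 * ((h - x₀) / 2 + ρ) * ((h + x₀) / 2)) *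
              stdGaussCDF ((h + x₀) / 2 - ((h - x₀) / 2 + ρ))) * stdGaussPDF x₀)
      + 1 - stdGaussCDF h
      = 1 - stdGaussCDF (h + ρ) * stdGaussCDF h
        + stdGaussPDF (h + ρ) / ρ * stdGaussCDF h
        - stdGaussPDF h * Real.exp (-2 * h * ρ) / ρ * stdGaussCDF (h - ρ) := by
  have hintegrand : ∀ x : ℝ,
      (1 - stdGaussCDF ((h + x) / 2 + ((h - x) / 2 + ρ))
        + exp (-2 * ((h - x) / 2 + ρ) * ((h + x) / 2)) *
            stdGaussCDF ((h + x) / 2 - ((h - x) / 2 + ρ))) * stdGaussPDF x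
      = (1 - stdGaussCDF (h + ρ)) * stdGaussPDF x
        + stdGaussPDF h * exp (-ρ * h) * (exp (-ρ * x) * stdGaussCDF (x - ρ)) := by
    intro x
    have hpdf := stdGaussPDF_add h (x - h)
    have hexp : exp (-2 * ((h - x) / 2 + ρ) * ((h + x) / 2)) * exp (-h * (x - h) - (x - h) ^ 2 / 2)
        = exp (-ρ * h) * exp (-ρ * x) := by
      rw [← exp_add, ← exp_add]; ring_nf
    rw [add_sub_cancel] at hpdf
    rw [show (h + x) / 2 + ((h - x) / 2 + ρ) = h + ρ by ring,
      show (h + x) / 2 - ((h - x) / 2 + ρ) = x - ρ by ring, hpdf]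
    linear_combination (stdGaussPDF h * stdGaussCDF (x - ρ)) * hexp
  rw [setIntegral_congr_fun measurableSet_Iic fun x _ => hintegrand x,
    integral_add (integrable_stdGaussPDF.integrableOn.const_mul _)
      ((integrableOn_Iic_exp_neg_mul_mul_stdGaussCDF_sub hρ h).const_mul _),
    integral_const_mul, integral_const_mul, ← stdGaussCDF,
    integral_Iic_exp_neg_mul_mul_stdGaussCDF_sub hρ h, stdGaussPDF_add,
    show -h * ρ - ρ ^ 2 / 2 = -ρ * h + -ρ ^ 2 / 2 by ring,
    show -2 * h * ρ = -ρ * h + -ρ * h by ring, exp_add, exp_add]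
  field_simp
  ring
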